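/- Separability criterion: Let A be a P-Frobenius algebra over k with Frobenius system (ψ, xᵢ, qᵢ, yᵢ). Then A is separable over k if and only if there exists d ∈ P ⊗ A such that Σᵢ xᵢ qᵢ d yᵢ = 1_A (using the pairing Q ⊗ P → k). -/

import Mathlib

open scoped TensorProduct

def IsInvertibleModule (k P : Type*) [CommRing k] [AddCommGroup P] [Module k P] : Prop :=
  Module.Finite k P ∧ Module.Projective k P ∧ Function.Bijective (contractRight k P)

/-!
The elements `xᵢ` and the functionals `a ↦ qᵢ (ψ (yᵢ a))` form a finite dual basis of `A`, so
every `z ∈ A ⊗ M` equals `∑ᵢ xᵢ ⊗ (qᵢ ψ (yᵢ ·) ⊗ id) z`; in particular elements of `A ⊗ M` are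
determined by these coordinates. Given a separability idempotent `e`, take `d = (ψ ⊗ id) e`:
moving `yᵢ` across `e` turns `∑ᵢ xᵢ (qᵢ d) yᵢ` into the multiplication of that expansion of `e`,
which is `μ e = 1`. Conversely, `e = ∑ᵢ xᵢ ⊗ (qᵢ d) yᵢ` has `μ e = 1`, and `a e = e a` is checked
coordinatewise; the computation needs `f u * g v = f v * g u` for functionals `f, g` on `P`, which
holds because `u ⊗ v = v ⊗ u` in `P ⊗ P` for an invertible module `P`.
-/

open TensorProduct LinearMap

namespace Module.Invertible

variable {k P : Type*} [CommSemiring k] [AddCommMonoid P] [Module k P] [Module.Invertible k P]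

theorem apply_mul_apply_comm (f g : Module.Dual k P) (p p' : P) : f p * g p' = f p' * g p := by
  simpa using congrArg (lift ((mul k k).compl₁₂ f g)) (tmul_comm (m₁ := p) (m₂ := p'))

theorem smul_lid_rTensor_comm {M : Type*} [AddCommMonoid M] [Module k M]
    (f g : Module.Dual k P) (u : P) (d : P ⊗[k] M) :
    f u • TensorProduct.lid k M (rTensor M g d) = g u • TensorProduct.lid k M (rTensor M f d) := by
  induction d using TensorProduct.induction_on with
  | zero => simp
  | tmul p m => rw [rTensor_tmul, rTensor_tmul, lid_tmul, lid_tmul, smul_smul, smul_smul,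
      apply_mul_apply_comm f g u p, mul_comm]
  | add d d' hd hd' => simp only [map_add, smul_add, hd, hd']

end Module.Invertible

theorem IsInvertibleModule.invertible {k P : Type*} [CommRing k] [AddCommGroup P] [Module k P]
    (h : IsInvertibleModule k P) : Module.Invertible k P where
  bijective := by
    have : contractLeft k P = contractRight k P ∘ₗ (TensorProduct.comm k _ P).toLinearMap :=
      TensorProduct.ext' fun _ _ => rfl
    rw [this]
    exact h.2.2.comp (LinearEquiv.bijective _)

namespace TensorProduct

variable {k V M ι : Type*} [CommSemiring k] [AddCommMonoid V] [Module k V]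
  [AddCommMonoid M] [Module k M] [Fintype ι] {v : ι → V} {f : ι → Module.Dual k V}

theorem sum_tmul_lid_rTensor_eq_self (hvf : ∀ u, ∑ i, f i u • v i = u) (z : V ⊗[k] M) :
    ∑ i, v i ⊗ₜ TensorProduct.lid k M (rTensor M (f i) z) = z := by
  induction z using TensorProduct.induction_on with
  | zero => simp
  | tmul u m => simp only [rTensor_tmul, lid_tmul, tmul_smul, smul_tmul', ← sum_tmul, hvf]
  | add z z' hz hz' => simp only [map_add, tmul_add, Finset.sum_add_distrib, hz, hz']

theorem ext_of_lid_rTensor_eq (hvf : ∀ u, ∑ i, f i u • v i = u) {z z' : V ⊗[k] M}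
    (h : ∀ i, TensorProduct.lid k M (rTensor M (f i) z)
      = TensorProduct.lid k M (rTensor M (f i) z')) :
    z = z' := by
  rw [← sum_tmul_lid_rTensor_eq_self hvf z, ← sum_tmul_lid_rTensor_eq_self hvf z']
  simp only [h]

theorem lid_rTensor_lTensor_mulRight {A : Type*} [Semiring A] [Algebra k A]
    (g : Module.Dual k V) (b : A) (z : V ⊗[k] A) :
    TensorProduct.lid k A (rTensor A g (lTensor V (mulRight k b) z))
      = TensorProduct.lid k A (rTensor A g z) * b := by
  induction z using TensorProduct.induction_on with
  | zero => simp
  | tmul u m => simp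
  | add z z' hz hz' => simp only [map_add, add_mul, hz, hz']

end TensorProduct

section Frobenius

variable {k A P ι : Type*} [CommSemiring k] [AddCommMonoid P] [Module k P] [Semiring A]
  [Algebra k A] [Fintype ι] (ψ : A →ₗ[k] P) (x y : ι → A) (q : ι → Module.Dual k P)

theorem sum_mul_lid_rTensor_rTensor_mul_eq_mul'
    (hright : ∀ a, ∑ i, q i (ψ (y i * a)) • x i = a) {e : A ⊗[k] A}
    (he : ∀ a, rTensor A (mulLeft k a) e = lTensor A (mulRight k a) e) :
    ∑ i, x i * TensorProduct.lid k A (rTensor A (q i) (rTensor A ψ e)) * y i = mul' k A e := by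
  have hcoord : ∀ i, TensorProduct.lid k A (rTensor A (q i) (rTensor A ψ e)) * y i
      = TensorProduct.lid k A (rTensor A (q i ∘ₗ ψ ∘ₗ mulLeft k (y i)) e) := by
    intro i
    rw [← rTensor_comp_apply, ← lid_rTensor_lTensor_mulRight, ← he, ← rTensor_comp_apply,
      comp_assoc]
  calc ∑ i, x i * TensorProduct.lid k A (rTensor A (q i) (rTensor A ψ e)) * y i
      = mul' k A
          (∑ i, x i ⊗ₜ TensorProduct.lid k A (rTensor A (q i ∘ₗ ψ ∘ₗ mulLeft k (y i)) e)) := by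
        simp only [mul_assoc, hcoord, map_sum, mul'_apply]
    _ = mul' k A e := by rw [sum_tmul_lid_rTensor_eq_self hright]

def twistedCasimir (d : P ⊗[k] A) : A ⊗[k] A :=
  ∑ i, x i ⊗ₜ (TensorProduct.lid k A (rTensor A (q i) d) * y i)

theorem mul'_twistedCasimir (d : P ⊗[k] A) :
    mul' k A (twistedCasimir x y q d)
      = ∑ i, x i * TensorProduct.lid k A (rTensor A (q i) d) * y i := by
  simp only [twistedCasimir, map_sum, mul'_apply, mul_assoc]

theorem sum_smul_lid_rTensor_mul_eq [Module.Invertible k P]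
    (hleft : ∀ a, ∑ i, q i (ψ (a * x i)) • y i = a) (d : P ⊗[k] A) (w : A) (j : ι) :
    ∑ i, q j (ψ (w * x i)) • (TensorProduct.lid k A (rTensor A (q i) d) * y i)
      = TensorProduct.lid k A (rTensor A (q j) d) * w := by
  calc ∑ i, q j (ψ (w * x i)) • (TensorProduct.lid k A (rTensor A (q i) d) * y i)
      = ∑ i, q i (ψ (w * x i)) • TensorProduct.lid k A (rTensor A (q j) d) * y i := by
        simp only [← smul_mul_assoc, Module.Invertible.smul_lid_rTensor_comm (q j)]
    _ = TensorProduct.lid k A (rTensor A (q j) d) * w := by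
        simp only [smul_mul_assoc, ← mul_smul_comm, ← Finset.mul_sum, hleft]

theorem rTensor_mulLeft_twistedCasimir [Module.Invertible k P]
    (hleft : ∀ a, ∑ i, q i (ψ (a * x i)) • y i = a)
    (hright : ∀ a, ∑ i, q i (ψ (y i * a)) • x i = a) (d : P ⊗[k] A) (a : A) :
    rTensor A (mulLeft k a) (twistedCasimir x y q d)
      = lTensor A (mulRight k a) (twistedCasimir x y q d) := by
  refine ext_of_lid_rTensor_eq (f := fun j => q j ∘ₗ ψ ∘ₗ mulLeft k (y j)) hright fun j => ?_
  simp only [twistedCasimir, map_sum, rTensor_tmul, lTensor_tmul, lid_tmul, comp_apply,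
    mulLeft_apply, mulRight_apply, ← mul_assoc]
  rw [sum_smul_lid_rTensor_mul_eq ψ x y q hleft, ← mul_assoc,
    ← sum_smul_lid_rTensor_mul_eq ψ x y q hleft d (y j) j, Finset.sum_mul]
  simp only [smul_mul_assoc]

end Frobenius

theorem separability_criterion_general (k A P : Type*) [CommRing k] [AddCommGroup P] [Module k P]
    [Ring A] [Algebra k A] (hP : IsInvertibleModule k P)
    (n : ℕ) (ψ : A →ₗ[k] P) (x y : Fin n → A) (q : Fin n → Module.Dual k P)
    (hleft : ∀ a : A, ∑ i, q i (ψ (a * x i)) • y i = a)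
    (hright : ∀ a : A, ∑ i, q i (ψ (y i * a)) • x i = a) :
    (∃ e : A ⊗[k] A, LinearMap.mul' k A e = 1 ∧
      ∀ a : A, (LinearMap.rTensor A (LinearMap.mulLeft k a)) e
        = (LinearMap.lTensor A (LinearMap.mulRight k a)) e) ↔
    (∃ d : P ⊗[k] A,
      ∑ i, x i * (TensorProduct.lid k A) ((LinearMap.rTensor A (q i)) d) * y i = 1) := by
  have := hP.invertible
  constructor
  · rintro ⟨e, he_mul, he_comm⟩
    exact ⟨rTensor A ψ e,
      (sum_mul_lid_rTensor_rTensor_mul_eq_mul' ψ x y q hright he_comm).trans he_mul⟩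
  · rintro ⟨d, hd⟩
    exact ⟨twistedCasimir x y q d, (mul'_twistedCasimir x y q d).trans hd,
      rTensor_mulLeft_twistedCasimir ψ x y q hleft hright d⟩

/-- Separability criterion for a `P`-Frobenius algebra `A` with Frobenius system
`(ψ, xᵢ, qᵢ, yᵢ)`: `A` is separable over `k` (has a separability idempotent) if and only
if there is `d ∈ P ⊗ A` with `Σᵢ xᵢ (qᵢ d) yᵢ = 1`, using the pairing `Q ⊗ P → k`
(`qᵢ ∈ Q = P*` applied to the `P`-component of `d`). -/
theorem separability_criterion (k A P : Type*) [CommRing k] [AddCommGroup P] [Module k P]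
    [Ring A] [Algebra k A] (hP : IsInvertibleModule k P)
    (hfin : Module.Finite k A) (hproj : Module.Projective k A)
    (n : ℕ) (ψ : A →ₗ[k] P) (x y : Fin n → A) (q : Fin n → Module.Dual k P)
    (hleft : ∀ a : A, ∑ i, q i (ψ (a * x i)) • y i = a)
    (hright : ∀ a : A, ∑ i, q i (ψ (y i * a)) • x i = a) :
    (∃ e : A ⊗[k] A, LinearMap.mul' k A e = 1 ∧
      ∀ a : A, (LinearMap.rTensor A (LinearMap.mulLeft k a)) e
        = (LinearMap.lTensor A (LinearMap.mulRight k a)) e) ↔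
    (∃ d : P ⊗[k] A,
      ∑ i, x i * (TensorProduct.lid k A) ((LinearMap.rTensor A (q i)) d) * y i = 1) :=
  separability_criterion_general k A P hP n ψ x y q hleft hright
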